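/- Let $U_{(k)}$ be the $k$th order statistic of $n$ i.i.d. uniform random variables on $[0,1]$, and set $\tau := k/(n+1)$. Then for all $c \ge 0$, $\mathbb{P}(U_{(k)} - \tau \ge c) \le \exp\left(-\frac{(n+1)c^2}{2\tau(1-\tau) + 2c}\right)$ and $\mathbb{P}(\tau - U_{(k)} \ge c) \le \exp\left(-\frac{(n+1)c^2}{2\tau(1-\tau) + 2c}\right)$. -/

import Mathlib

/-!
If `U_(k) ≥ τ + c`, at least `n + 1 - k` of the samples lie in `[τ + c, 1]`; if `U_(k) ≤ τ - c`,
at least `k` of them lie in `[0, τ - c]`. In both cases at least `m` of `n` independent samples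
fall into a set of probability `p = q - c`, where `q = m / (n + 1)`. Markov's inequality for
`r ^ (number of samples in the set)`, with the optimal `r`, bounds this by
`(p / q) ^ m ((1 - p) / (1 - q)) ^ (n - m) ≤ exp (-(n + 1) Ψ)`, where `Ψ` is the Kullback–Leibler
divergence of Bernoulli(`q`) from Bernoulli(`p`). Finally `Ψ ≥ c² / (2q(1 - q) + 2c)`, by
comparing derivatives in `c`; as this bound is symmetric under `q ↦ 1 - q`, it serves both tails.
-/

open MeasureTheory

/-- The `k`-th smallest value (1-indexed) among `ω 0, …, ω (n-1)`. -/
noncomputable def orderStat (n k : ℕ) (ω : Fin n → ℝ) : ℝ :=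
  sInf {x : ℝ | k ≤ (Finset.univ.filter fun i => ω i ≤ x).card}

open ProbabilityTheory Finset
open scoped ENNReal

section Chernoff

variable {α ι : Type*} [MeasurableSpace α] [Fintype ι] {μ : Measure α} [IsProbabilityMeasure μ]
  {S : Set α} [DecidablePred (· ∈ S)]

theorem measure_pi_card_filter_mem_ge_le (hS : MeasurableSet S) (m : ℕ) {r : ℝ≥0∞}
    (hr : 1 ≤ r) (hr_top : r ≠ ∞) :
    Measure.pi (fun _ : ι => μ) {ω | m ≤ #{i | ω i ∈ S}}
      ≤ (μ S * r + μ Sᶜ) ^ Fintype.card ι / r ^ m := by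
  set g : α → ℝ≥0∞ := S.piecewise (fun _ => r) fun _ => 1
  have hg : Measurable g := measurable_const.piecewise hS measurable_const
  have hg_pi : Measurable fun ω : ι → α => ∏ i, g (ω i) :=
    Finset.measurable_prod _ fun i _ => hg.comp (measurable_pi_apply i)
  have hprod (ω : ι → α) : ∏ i, g (ω i) = r ^ #{i | ω i ∈ S} := by
    simp only [g, Set.piecewise, prod_ite, prod_const, one_pow, mul_one]
  have hint : ∫⁻ y, g y ∂μ = μ S * r + μ Sᶜ := by
    rw [lintegral_piecewise hS, setLIntegral_const, setLIntegral_const, one_mul, mul_comm]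
  calc Measure.pi (fun _ : ι => μ) {ω | m ≤ #{i | ω i ∈ S}}
      ≤ Measure.pi (fun _ : ι => μ) {ω | r ^ m ≤ ∏ i, g (ω i)} :=
        measure_mono fun ω hω => by
          simpa only [Set.mem_ofPred_eq, hprod] using pow_le_pow_right₀ hr hω
    _ ≤ (∫⁻ ω, ∏ i, g (ω i) ∂Measure.pi fun _ : ι => μ) / r ^ m :=
        meas_ge_le_lintegral_div hg_pi.aemeasurable (pow_ne_zero _ (by positivity))
          (by finiteness)
    _ = (μ S * r + μ Sᶜ) ^ Fintype.card ι / r ^ m := by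
        rw [lintegral_prod_eq_prod_lintegral_of_indepFun _ _
          (iIndepFun_pi fun _ => hg.aemeasurable) fun i => hg.comp (measurable_pi_apply i)]
        simp_rw [(measurePreserving_eval (fun _ : ι => μ) _).lintegral_comp hg, hint,
          prod_const, card_univ]

end Chernoff

section BernoulliKL

open Real Set

/-- `bernoulliKL q p` is the paper's `Ψ(p, q)`. -/
noncomputable def bernoulliKL (q p : ℝ) : ℝ :=
  q * log (q / p) + (1 - q) * log ((1 - q) / (1 - p))

theorem exp_neg_mul_bernoulliKL {p : ℝ} (hp0 : 0 < p) (hp1 : p < 1) {m N : ℕ} (hm0 : 0 < m)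
    (hm : m ≤ N) :
    exp (-(N + 1) * bernoulliKL (m / (N + 1)) p)
      = (p / (m / (N + 1))) ^ m * ((1 - p) / (1 - m / (N + 1))) ^ (N + 1 - m) := by
  set q : ℝ := m / (N + 1)
  have hN : (0 : ℝ) < N + 1 := by positivity
  have hq0 : 0 < q := by positivity
  have hq1 : q < 1 := by rw [div_lt_one hN]; exact_mod_cast Nat.lt_succ_of_le hm
  have hmq : (m : ℝ) = (N + 1) * q := by simp only [q]; field_simp
  have hNm : ((N + 1 - m : ℕ) : ℝ) = (N + 1) * (1 - q) := by
    rw [Nat.cast_sub (by omega)]; push_cast; rw [hmq]; ring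
  have hp1' : 0 < 1 - p := by linarith
  have hq1' : 0 < 1 - q := by linarith
  rw [← exp_log (show 0 < (p / q) ^ m * ((1 - p) / (1 - q)) ^ (N + 1 - m) by positivity),
    log_mul (by positivity) (by positivity), log_pow, log_pow, hmq, hNm, bernoulliKL,
    log_div hq0.ne' hp0.ne', log_div hq1'.ne' hp1'.ne', log_div hp0.ne' hq0.ne',
    log_div hp1'.ne' hq1'.ne']
  ring_nf

theorem sq_div_le_bernoulliKL_sub {q c : ℝ} (hc : 0 ≤ c) (hcq : c < q) (hq : q < 1) :
    c ^ 2 / (2 * q * (1 - q) + 2 * c) ≤ bernoulliKL q (q - c) := by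
  set A := q * (1 - q)
  have hA : 0 < A := mul_pos (by linarith) (by linarith)
  set g : ℝ → ℝ := fun u => q * (log q - log (q - u)) + (1 - q) * (log (1 - q) - log (1 - q + u))
    - u ^ 2 / (2 * (A + u))
  have hg' : ∀ u ∈ Icc 0 c, HasDerivAt g
      (u / ((q - u) * (1 - q + u)) - u * (2 * A + u) / (2 * (A + u) ^ 2)) u := by
    rintro u ⟨hu0, huc⟩
    have h1 : q - u ≠ 0 := by linarith
    have h2 : 1 - q + u ≠ 0 := by linarith
    have h3 : A + u ≠ 0 := by linarith
    have := ((((hasDerivAt_id u).const_sub q).log h1).const_sub (log q) |>.const_mul q).add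
      ((((hasDerivAt_id u).const_add (1 - q)).log h2).const_sub (log (1 - q)) |>.const_mul (1 - q))
      |>.sub ((hasDerivAt_pow 2 u).div (((hasDerivAt_id u).const_add A).const_mul 2) (by simpa))
    refine this.congr_deriv ?_
    simp only [id]
    field_simp
    ring
  -- `(q - u)(1 - q + u) = A - (1 - 2q)u - u² ≤ A + u`
  have hg'_nonneg : ∀ u ∈ Ioo 0 c,
      0 ≤ u / ((q - u) * (1 - q + u)) - u * (2 * A + u) / (2 * (A + u) ^ 2) := by
    rintro u ⟨hu0, huc⟩
    have hAu : 0 < A + u := by linarith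
    have hprod : 0 < (q - u) * (1 - q + u) := mul_pos (by linarith) (by linarith)
    rw [sub_nonneg]
    calc u * (2 * A + u) / (2 * (A + u) ^ 2) ≤ u / (A + u) := by
          rw [div_le_div_iff₀ (by positivity) hAu]; nlinarith [mul_pos hu0 (mul_pos hu0 hAu)]
      _ ≤ u / ((q - u) * (1 - q + u)) :=
          div_le_div_of_nonneg_left hu0.le hprod (by nlinarith)
  have hmono : MonotoneOn g (Icc 0 c) :=
    monotoneOn_of_hasDerivWithinAt_nonneg (convex_Icc 0 c)
      (fun u hu => (hg' u hu).continuousAt.continuousWithinAt)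
      (fun u hu => (hg' u (interior_subset hu)).hasDerivWithinAt)
      (fun u hu => hg'_nonneg u (by rwa [interior_Icc] at hu))
  have hg0 : g 0 = 0 := by simp [g]
  have hgc : g c = bernoulliKL q (q - c) - c ^ 2 / (2 * q * (1 - q) + 2 * c) := by
    simp only [g, A, bernoulliKL]
    rw [log_div (by linarith) (by linarith), log_div (by linarith) (by linarith)]
    ring_nf
  linarith [hmono (left_mem_Icc.2 hc) (right_mem_Icc.2 hc) hc]

end BernoulliKL

section BinomialTail

variable {α ι : Type*} [MeasurableSpace α] [Fintype ι] {μ : Measure α} [IsProbabilityMeasure μ]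
  {S : Set α} [DecidablePred (· ∈ S)]

theorem measure_pi_card_filter_mem_ge_le_exp_bernoulliKL (hS : MeasurableSet S) {m : ℕ}
    (hm : m ≤ Fintype.card ι) {p : ℝ} (hμS : μ S = ENNReal.ofReal p) (hp : 0 < p)
    (hpq : p ≤ m / (Fintype.card ι + 1)) :
    Measure.pi (fun _ : ι => μ) {ω | m ≤ #{i | ω i ∈ S}}
      ≤ ENNReal.ofReal (Real.exp (-(Fintype.card ι + 1) *
          bernoulliKL (m / (Fintype.card ι + 1)) p)) := by
  set N := Fintype.card ι
  set q : ℝ := m / (N + 1)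
  have hm0 : 0 < m := Nat.pos_of_ne_zero fun h => by
    simp only [q, h, Nat.cast_zero, zero_div] at hpq; linarith
  have hq1 : q < 1 := by rw [div_lt_one (by positivity)]; exact_mod_cast Nat.lt_succ_of_le hm
  have hp1 : 0 < 1 - p := by linarith
  have hq1' : 0 < 1 - q := by linarith
  have hμSc : μ Sᶜ = ENNReal.ofReal (1 - p) := by
    rw [prob_compl_eq_one_sub hS, hμS, ENNReal.ofReal_sub _ hp.le, ENNReal.ofReal_one]
  set a := p / q with ha_def
  set b := (1 - p) / (1 - q) with hb_def
  have ha : 0 < a := by positivity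
  have ha1 : a ≤ 1 := by rw [div_le_one (by linarith)]; exact hpq
  have hb1 : 1 ≤ b := by rw [le_div_iff₀ hq1']; linarith
  -- `b / a = q(1 - p) / (p(1 - q))` is the optimal tilt in the Chernoff bound
  have hr : 1 ≤ b / a := by rw [le_div_iff₀ ha]; linarith
  have hbase : p * (b / a) + (1 - p) = b := by
    rw [ha_def, hb_def]; field_simp; ring
  clear_value a b
  calc Measure.pi (fun _ : ι => μ) {ω | m ≤ #{i | ω i ∈ S}}
      ≤ (μ S * ENNReal.ofReal (b / a) + μ Sᶜ) ^ N / ENNReal.ofReal (b / a) ^ m :=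
        measure_pi_card_filter_mem_ge_le hS m (ENNReal.one_le_ofReal.2 hr) ENNReal.ofReal_ne_top
    _ = ENNReal.ofReal (b ^ N / (b / a) ^ m) := by
        rw [hμS, hμSc, ← ENNReal.ofReal_mul hp.le, ← ENNReal.ofReal_add (by positivity) hp1.le,
          hbase, ← ENNReal.ofReal_pow (by positivity), ← ENNReal.ofReal_pow (by positivity),
          ENNReal.ofReal_div_of_pos (by positivity)]
    _ ≤ ENNReal.ofReal (a ^ m * b ^ (N + 1 - m)) := by
        refine ENNReal.ofReal_le_ofReal ?_
        rw [div_pow, div_div_eq_mul_div, mul_comm, mul_div_assoc, div_eq_mul_inv,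
          ← pow_sub₀ b (by positivity) hm]
        exact mul_le_mul_of_nonneg_left (pow_le_pow_right₀ hb1 (by omega)) (by positivity)
    _ = _ := by rw [exp_neg_mul_bernoulliKL hp (by linarith) hm0 hm, ha_def, hb_def]

theorem measure_pi_card_filter_mem_ge_le_exp (hS : MeasurableSet S) {m : ℕ} (hm0 : 0 < m)
    (hm : m ≤ Fintype.card ι) {c : ℝ} (hc : 0 ≤ c)
    (hμS : μ S = ENNReal.ofReal (m / (Fintype.card ι + 1) - c)) :
    Measure.pi (fun _ : ι => μ) {ω | m ≤ #{i | ω i ∈ S}}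
      ≤ ENNReal.ofReal (Real.exp (-((Fintype.card ι + 1) * c ^ 2) /
          (2 * (m / (Fintype.card ι + 1)) * (1 - m / (Fintype.card ι + 1)) + 2 * c))) := by
  set N := Fintype.card ι
  set q : ℝ := m / (N + 1)
  by_cases hp : 0 < q - c
  · have hq1 : q < 1 := by rw [div_lt_one (by positivity)]; exact_mod_cast Nat.lt_succ_of_le hm
    refine (measure_pi_card_filter_mem_ge_le_exp_bernoulliKL hS hm hμS hp (by linarith)).trans
      (ENNReal.ofReal_le_ofReal (Real.exp_le_exp.2 ?_))
    rw [neg_div, neg_mul, neg_le_neg_iff, mul_div_assoc]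
    exact mul_le_mul_of_nonneg_left (sq_div_le_bernoulliKL_sub hc (by linarith) hq1)
      (by positivity)
  · have hS0 : μ S = 0 := by rw [hμS, ENNReal.ofReal_of_nonpos (not_lt.1 hp)]
    have hsub : {ω : ι → α | m ≤ #{i | ω i ∈ S}} ⊆ ⋃ i, (fun ω => ω i) ⁻¹' S := by
      intro ω hω
      obtain ⟨i, hi⟩ := card_pos.1 (hm0.trans_le hω)
      exact Set.mem_iUnion.2 ⟨i, (mem_filter.1 hi).2⟩
    rw [measure_mono_null hsub (measure_iUnion_null fun i => Measure.pi_eval_preimage_null _ hS0)]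
    exact zero_le

end BinomialTail

instance : IsProbabilityMeasure (volume.restrict (Set.Icc (0 : ℝ) 1)) :=
  ⟨by simp⟩

theorem volume_restrict_Icc_zero_one_Ici {t : ℝ} (ht : 0 ≤ t) :
    volume.restrict (Set.Icc (0 : ℝ) 1) (Set.Ici t) = ENNReal.ofReal (1 - t) := by
  rw [Measure.restrict_apply measurableSet_Ici, ← Set.Ici_inter_Iic, ← Set.inter_assoc,
    Set.Ici_inter_Ici, sup_eq_left.2 ht, Set.Ici_inter_Iic, Real.volume_Icc]

theorem volume_restrict_Icc_zero_one_Iic {s : ℝ} (hs : s ≤ 1) :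
    volume.restrict (Set.Icc (0 : ℝ) 1) (Set.Iic s) = ENNReal.ofReal s := by
  rw [Measure.restrict_apply measurableSet_Iic, ← Set.Ici_inter_Iic, Set.inter_comm,
    Set.inter_assoc, Set.Iic_inter_Iic, inf_eq_right.2 hs, Set.Ici_inter_Iic, Real.volume_Icc,
    sub_zero]

section OrderStat

variable {n k : ℕ} {ω : Fin n → ℝ}

theorem orderStat_le_of_le_card (hk : 1 ≤ k) {x : ℝ} (hx : k ≤ #{i | ω i ≤ x}) :
    orderStat n k ω ≤ x := by
  refine csInf_le ?_ hx
  obtain ⟨b, hb⟩ := (Set.finite_range ω).bddBelow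
  refine ⟨b, fun y hy => ?_⟩
  obtain ⟨i, hi⟩ := card_pos.1 (hk.trans hy)
  exact (hb (Set.mem_range_self i)).trans (mem_filter.1 hi).2

theorem orderStat_le_iff (hk : 1 ≤ k) (hkn : k ≤ n) {x : ℝ} :
    orderStat n k ω ≤ x ↔ k ≤ #{i | ω i ≤ x} := by
  refine ⟨fun hωx => ?_, orderStat_le_of_le_card hk⟩
  by_contra! hlt
  have hcard := card_filter_add_card_filter_not (s := univ) fun i => ω i ≤ x
  rw [card_univ, Fintype.card_fin] at hcard
  set G : Finset (Fin n) := {i | ¬ω i ≤ x}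
  have hGne : G.Nonempty := card_ne_zero.1 (by omega)
  -- the smallest coordinate above `x` is a lower bound of the set defining `orderStat`
  have hxb : x < G.inf' hGne ω := (lt_inf'_iff hGne).2 fun i hi => not_le.1 (mem_filter.1 hi).2
  have hbω : G.inf' hGne ω ≤ orderStat n k ω := by
    obtain ⟨B, hB⟩ := (Set.finite_range ω).bddAbove
    refine le_csInf ⟨B, ?_⟩ fun y hy => ?_
    · rw [Set.mem_ofPred_eq, filter_true_of_mem fun i _ => hB (Set.mem_range_self i), card_univ,
        Fintype.card_fin]
      exact hkn
    by_contra! hyb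
    refine (hy.trans (card_le_card fun i hi => ?_)).not_gt hlt
    refine mem_filter.2 ⟨mem_univ i, not_lt.1 fun hix => ?_⟩
    exact ((inf'_le ω (mem_filter.2 ⟨mem_univ i, not_le.2 hix⟩)).trans
      (mem_filter.1 hi).2).not_gt hyb
  linarith

theorem le_card_filter_le_of_le_orderStat (hk : 1 ≤ k) {t : ℝ} (ht : t ≤ orderStat n k ω) :
    n + 1 - k ≤ #{i | t ≤ ω i} := by
  by_contra! hlt
  have hcard := card_filter_add_card_filter_not (s := univ) fun i => t ≤ ω i
  rw [card_univ, Fintype.card_fin] at hcard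
  set F : Finset (Fin n) := {i | ¬t ≤ ω i}
  have hF : k ≤ #F := by omega
  have hFne : F.Nonempty := card_pos.1 (hk.trans hF)
  -- the largest coordinate below `t` already has `k` coordinates at or below it
  have hxt : F.sup' hFne ω < t := (sup'_lt_iff hFne).2 fun i hi => not_le.1 (mem_filter.1 hi).2
  have hωx : orderStat n k ω ≤ F.sup' hFne ω :=
    orderStat_le_of_le_card hk <| hF.trans <| card_le_card fun i hi =>
      mem_filter.2 ⟨mem_univ i, le_sup' ω hi⟩
  linarith

end OrderStat

/-- Exponential inequality for uniform order statistics: with `τ = k/(n+1)`,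
`P(±(U_(k) - τ) ≥ c) ≤ exp(-(n+1)c²/(2τ(1-τ)+2c))`. -/
theorem uniform_order_statistic_tail (n k : ℕ) (hk : 1 ≤ k) (hkn : k ≤ n) :
    let P : Measure (Fin n → ℝ) :=
      Measure.pi fun _ => volume.restrict (Set.Icc (0 : ℝ) 1)
    let τ : ℝ := k / (n + 1)
    ∀ c : ℝ, 0 ≤ c →
      P {ω | c ≤ orderStat n k ω - τ} ≤
          ENNReal.ofReal
            (Real.exp (-((n + 1) * c ^ 2) / (2 * τ * (1 - τ) + 2 * c))) ∧
        P {ω | c ≤ τ - orderStat n k ω} ≤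
          ENNReal.ofReal
            (Real.exp (-((n + 1) * c ^ 2) / (2 * τ * (1 - τ) + 2 * c))) := by
  intro P τ c hc
  have hτ : (k : ℝ) / (n + 1) = τ := rfl
  have hτ' : ((n + 1 - k : ℕ) : ℝ) / (n + 1) = 1 - τ := by
    rw [← hτ, Nat.cast_sub (by omega)]; push_cast; field_simp
  have hτ0 : 0 ≤ τ := by positivity
  have hτ1 : τ ≤ 1 := by
    rw [← hτ, div_le_one (by positivity)]; exact_mod_cast hkn.trans n.le_succ
  clear_value τ
  constructor
  · have hbound := measure_pi_card_filter_mem_ge_le_exp (ι := Fin n) (m := n + 1 - k)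
      (S := Set.Ici (τ + c)) measurableSet_Ici (by omega) (by rw [Fintype.card_fin]; omega) hc (by
        rw [Fintype.card_fin, hτ', sub_sub, volume_restrict_Icc_zero_one_Ici (by positivity)])
    rw [Fintype.card_fin, hτ', sub_sub_cancel, mul_right_comm] at hbound
    refine (measure_mono fun ω hω => ?_).trans hbound
    simpa using le_card_filter_le_of_le_orderStat hk (le_sub_iff_add_le'.1 hω)
  · have hbound := measure_pi_card_filter_mem_ge_le_exp (ι := Fin n) (m := k)
      (S := Set.Iic (τ - c)) measurableSet_Iic hk (by rwa [Fintype.card_fin]) hc (by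
        rw [Fintype.card_fin, hτ, volume_restrict_Icc_zero_one_Iic (by linarith)])
    rw [Fintype.card_fin, hτ] at hbound
    refine (measure_mono fun ω hω => ?_).trans hbound
    simpa using (orderStat_le_iff hk hkn).1 (le_sub_comm.1 hω)
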